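/- (Relations among the operators 𝔻_r; coordinate model.) For a 1-form λ of order k and 0 ≤ r ≤ k, define 𝔻_r(λ) := ∑_{j=r}^{k} ((−1)^{j+r} / j!) · d_T^{j−r}(S^jλ), a 1-form of order 2k−r (each summand regarded as a 1-form of order 2k−r), and set 𝔻_{k+1}(λ) := 0. Then: (i) for 1 ≤ r ≤ k, 𝔻_{r−1}(λ) = (1/(r−1)!)·S^{r−1}λ − d_T(𝔻_r(λ)) (as 1-forms of order 2k−r+1); (ii) for 0 ≤ r ≤ k, S(𝔻_r(λ)) = r·𝔻_{r+1}(λ) (as 1-forms of order 2k−r). In particular S(𝔻_0(λ)) = 0 and S^k(𝔻_1(λ)) = 0. -/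

import Mathlib

noncomputable section

/-- Partial Fréchet derivative in slot `r` of a map defined on `Fin m → E`,
as a continuous linear map (zero junk value for `r ≥ m`). -/
def pd {m : ℕ} {E W : Type*} [NormedAddCommGroup E] [NormedSpace ℝ E]
    [NormedAddCommGroup W] [NormedSpace ℝ W]
    (F : (Fin m → E) → W) (r : ℕ) (A : Fin m → E) : E →L[ℝ] W :=
  if h : r < m then
    (fderiv ℝ F A).comp
      (ContinuousLinearMap.pi (Pi.single (⟨r, h⟩ : Fin m) (ContinuousLinearMap.id ℝ E)))
  else 0

/-- The space of `k`-jets `J_k = (ℝ^n)^{k+1}`, slots indexed `0,…,k`. -/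
abbrev Jet (n k : ℕ) := Fin (k + 1) → EuclideanSpace ℝ (Fin n)

/-- A `1`-form of order `k` in the coordinate model: a map from `J_k` to the
`(k+1)`-tuples of linear functionals on `ℝ^n`. -/
abbrev OneForm (n k : ℕ) := Jet n k → Fin (k + 1) → (EuclideanSpace ℝ (Fin n) →L[ℝ] ℝ)

/-- Truncation of a jet to lower order. -/
def trunc {n k m : ℕ} (h : m ≤ k) (A : Jet n k) : Jet n m := fun i => A ⟨i, by omega⟩

/-- The `r`-th component of a 1-form at a jet, with the convention that components of
index `> k` are zero. -/
def comp' {n k : ℕ} (lam : OneForm n k) (A : Jet n k) (r : ℕ) :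
    EuclideanSpace ℝ (Fin n) →L[ℝ] ℝ :=
  if h : r < k + 1 then lam A ⟨r, h⟩ else 0

/-- The `r`-th component at a (possibly higher-order) jet of a 1-form of order `m`,
regarded as a 1-form of any order `k ≥ m` by precomposing with truncation. -/
def compAt {n k m : ℕ} (lam : OneForm n m) (A : Jet n k) (r : ℕ) :
    EuclideanSpace ℝ (Fin n) →L[ℝ] ℝ :=
  if h : m ≤ k then comp' lam (trunc h A) r else 0

/-- The vertical endomorphism: `(Sλ)(A)_r = (r+1) ⬝ λ(A)_{r+1}`. -/
def VS {n k : ℕ} (lam : OneForm n k) : OneForm n k :=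
  fun A r => (((r : ℕ) + 1 : ℕ) : ℝ) • comp' lam A ((r : ℕ) + 1)

/-- The total time derivative of a map `F : J_k → W`:
`D_T F (A) = ∑_{j=0}^{k} ∂_j F(Ā)(A_{j+1})`. -/
def DT {n k : ℕ} {W : Type*} [NormedAddCommGroup W] [NormedSpace ℝ W]
    (F : Jet n k → W) (A : Jet n (k + 1)) : W :=
  ∑ j : Fin (k + 1), pd F j (trunc (Nat.le_succ k) A) (A j.succ)

/-- The total time derivative of a 1-form of order `k`:
`(d_Tλ)(A)_r = D_T(λ_{(r)})(A) + λ(Ā)_{r-1}`, with `λ(Ā)_{-1} := 0`. -/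
def dT {n k : ℕ} (lam : OneForm n k) : OneForm n (k + 1) :=
  fun A r =>
    DT (fun B => comp' lam B r) A +
      match (r : ℕ) with
      | 0 => 0
      | (s + 1) => comp' lam (trunc (Nat.le_succ k) A) s

/-- Iterated total time derivative of a 1-form. -/
def dTiter {n k : ℕ} : (j : ℕ) → OneForm n k → OneForm n (k + j)
  | 0, lam => lam
  | (j + 1), lam => dT (dTiter j lam)

end

noncomputable section

/-- The operator `𝔻_r(λ) = ∑_{j=r}^{k} ((−1)^{j+r}/j!) d_T^{j−r}(S^jλ)`, a 1-form of order
`2k−r` (each summand `d_T^{j−r}(S^jλ)` has order `k+j−r` and is regarded as a 1-form of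
order `2k−r` via truncation).  For `r = k+1` the sum is empty, i.e. `𝔻_{k+1}(λ) = 0`. -/
def Dop {n k : ℕ} (r : ℕ) (lam : OneForm n k) : OneForm n (2 * k - r) :=
  fun A i => ∑ j ∈ Finset.Icc r k,
    ((-1 : ℝ) ^ (j + r) / (j.factorial : ℝ)) • compAt (dTiter (j - r) (VS^[j] lam)) A i

/-! The whole computation rests on the commutation rule `S ∘ d_T = d_T ∘ S + id`, where `id`
regards a form of order `m` as one of order `m + 1`: the `r`-th component of `d_T λ` is
`D_T λ_(r) + λ_(r-1)`, and `S` multiplies the shifted component by `r + 1`. Iterating,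
`S d_Tᵖ = d_Tᵖ S + p d_Tᵖ⁻¹`, so applying `S` termwise to `𝔻_r` and reindexing gives `r 𝔻_{r+1}`
thanks to `1/(r+i)! - (i+1)/(r+i+1)! = r/(r+i+1)!`. Relation (i) just splits off the `j = r - 1`
term of `𝔻_{r-1}`; the remaining terms are `-d_T` of those of `𝔻_r`, since `d_T` is linear and
commutes with regarding a form at a higher order. Iterating (ii) gives `S^q 𝔻_1 = q! 𝔻_{q+1}`,
which vanishes for `q = k`. -/

open Finset
open scoped ContDiff

section TotalDerivative

variable {n : ℕ} {W : Type*} [NormedAddCommGroup W] [NormedSpace ℝ W]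

def truncCLM {k m : ℕ} (h : m ≤ k) : Jet n k →L[ℝ] Jet n m :=
  ContinuousLinearMap.pi fun i => ContinuousLinearMap.proj ⟨i, by omega⟩

lemma contDiff_trunc {k m : ℕ} (h : m ≤ k) : ContDiff ℝ ∞ (trunc (n := n) h) :=
  (truncCLM h).contDiff

lemma DT_eq_fderiv {k : ℕ} (F : Jet n k → W) (A : Jet n (k + 1)) :
    DT F A = fderiv ℝ F (trunc (Nat.le_succ k) A) (Fin.tail A) := by
  rw [← Finset.univ_sum_single (Fin.tail A), map_sum]
  refine sum_congr rfl fun j _ => ?_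
  simp only [pd, dif_pos j.isLt, Fin.tail]
  rw [ContinuousLinearMap.comp_apply]
  congr 1
  ext i : 1
  by_cases h : i = j <;> simp [h]

lemma DT_add {k : ℕ} {F G : Jet n k → W} (A : Jet n (k + 1))
    (hF : DifferentiableAt ℝ F (trunc (Nat.le_succ k) A))
    (hG : DifferentiableAt ℝ G (trunc (Nat.le_succ k) A)) :
    DT (fun B => F B + G B) A = DT F A + DT G A := by
  simp only [DT_eq_fderiv, fderiv_fun_add hF hG, add_apply]

lemma DT_const_smul {k : ℕ} (c : ℝ) (F : Jet n k → W) (A : Jet n (k + 1)) :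
    DT (fun B => c • F B) A = c • DT F A := by
  simp only [DT_eq_fderiv, ← Pi.smul_def, fderiv_const_smul_field, Pi.smul_apply, smul_apply]

lemma DT_comp_trunc {k m : ℕ} (h : m ≤ k) {F : Jet n m → W} (A : Jet n (k + 1))
    (hF : DifferentiableAt ℝ F (trunc (Nat.le_succ m) (trunc (Nat.succ_le_succ h) A))) :
    DT (fun B => F (trunc h B)) A = DT F (trunc (Nat.succ_le_succ h) A) := by
  change DT (F ∘ truncCLM h) A = _
  rw [DT_eq_fderiv, DT_eq_fderiv,
    fderiv_comp (trunc (Nat.le_succ k) A) hF (truncCLM h).differentiableAt,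
    ContinuousLinearMap.fderiv]
  rfl

lemma contDiff_DT {k : ℕ} {F : Jet n k → W} (hF : ContDiff ℝ ∞ F) : ContDiff ℝ ∞ (DT F) := by
  have htail : ContDiff ℝ ∞ fun A : Jet n (k + 1) => Fin.tail A :=
    contDiff_pi.2 fun i => contDiff_apply ℝ _ i.succ
  simp_rw [funext (DT_eq_fderiv F)]
  exact ((hF.fderiv_right le_rfl).comp (contDiff_trunc _)).clm_apply htail

end TotalDerivative

section Components

variable {n : ℕ}

lemma comp'_coe {k : ℕ} (μ : OneForm n k) (A : Jet n k) (i : Fin (k + 1)) :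
    comp' μ A i = μ A i :=
  dif_pos i.isLt

lemma comp'_of_le {k : ℕ} (μ : OneForm n k) (A : Jet n k) {t : ℕ} (ht : k + 1 ≤ t) :
    comp' μ A t = 0 :=
  dif_neg (by omega)

lemma OneForm.ext_comp' {k : ℕ} {μ ν : OneForm n k}
    (h : ∀ A t, comp' μ A t = comp' ν A t) : μ = ν := by
  ext A i : 2
  simpa only [comp'_coe] using h A i

@[simp]
lemma comp'_add {k : ℕ} (μ ν : OneForm n k) (A : Jet n k) (t : ℕ) :
    comp' (μ + ν) A t = comp' μ A t + comp' ν A t := by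
  unfold comp'; split_ifs <;> simp

@[simp]
lemma comp'_smul {k : ℕ} (c : ℝ) (μ : OneForm n k) (A : Jet n k) (t : ℕ) :
    comp' (c • μ) A t = c • comp' μ A t := by
  unfold comp'; split_ifs <;> simp

@[simp]
lemma comp'_sub {k : ℕ} (μ ν : OneForm n k) (A : Jet n k) (t : ℕ) :
    comp' (μ - ν) A t = comp' μ A t - comp' ν A t := by
  unfold comp'; split_ifs <;> simp

@[simp]
lemma comp'_zero {k : ℕ} (A : Jet n k) (t : ℕ) : comp' (0 : OneForm n k) A t = 0 := by
  unfold comp'; split_ifs <;> simp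

lemma compAt_eq {k m : ℕ} (μ : OneForm n m) (h : m ≤ k) (A : Jet n k) (t : ℕ) :
    compAt μ A t = comp' μ (trunc h A) t :=
  dif_pos h

lemma compAt_self {m : ℕ} (μ : OneForm n m) (A : Jet n m) (t : ℕ) :
    compAt μ A t = comp' μ A t :=
  dif_pos le_rfl

lemma compAt_of_lt {k m : ℕ} (μ : OneForm n m) (h : k < m) (A : Jet n k) (t : ℕ) :
    compAt μ A t = 0 :=
  dif_neg (by omega)

/-- `μ` regarded as a 1-form of order `K`, with junk value `0` when `K < m`. -/
def regard {m : ℕ} (K : ℕ) : OneForm n m →ₗ[ℝ] OneForm n K where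
  toFun μ A i := compAt μ A i
  map_add' μ ν := by
    ext A i : 2
    by_cases h : m ≤ K <;> simp [compAt, h]
  map_smul' c μ := by
    ext A i : 2
    by_cases h : m ≤ K <;> simp [compAt, h]

lemma comp'_regard {m K : ℕ} (μ : OneForm n m) (A : Jet n K) (t : ℕ) :
    comp' (regard K μ) A t = compAt μ A t := by
  by_cases ht : t < K + 1
  · exact dif_pos ht
  · rw [comp'_of_le _ _ (by omega)]
    by_cases h : m ≤ K
    · rw [compAt_eq μ h, comp'_of_le _ _ (by omega)]
    · rw [compAt_of_lt μ (by omega)]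

lemma regard_self {m : ℕ} (μ : OneForm n m) : regard m μ = μ :=
  OneForm.ext_comp' fun A t => by rw [comp'_regard, compAt_self]

lemma regard_of_lt {m K : ℕ} (μ : OneForm n m) (h : K < m) : regard K μ = 0 :=
  OneForm.ext_comp' fun A t => by rw [comp'_regard, compAt_of_lt μ h, comp'_zero]

lemma regard_regard {m K L : ℕ} (μ : OneForm n m) (hm : m ≤ K) (hK : K ≤ L) :
    regard L (regard K μ) = regard L μ :=
  OneForm.ext_comp' fun A t => by
    rw [comp'_regard, comp'_regard, compAt_eq _ hK, comp'_regard, compAt_eq μ hm,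
      compAt_eq μ (hm.trans hK)]
    rfl

end Components

section Operators

variable {n : ℕ}

lemma comp'_VS {k : ℕ} (μ : OneForm n k) (A : Jet n k) (t : ℕ) :
    comp' (VS μ) A t = ((t : ℝ) + 1) • comp' μ A (t + 1) := by
  by_cases ht : t < k + 1
  · rw [comp'_coe (VS μ) A ⟨t, ht⟩]
    simp [VS]
  · rw [comp'_of_le _ _ (by omega), comp'_of_le _ _ (by omega), smul_zero]

lemma VS_smul {k : ℕ} (c : ℝ) (μ : OneForm n k) : VS (c • μ) = c • VS μ :=
  OneForm.ext_comp' fun A t => by simp only [comp'_VS, comp'_smul, smul_comm c]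

lemma VS_sum {k : ℕ} {ι : Type*} (s : Finset ι) (μ : ι → OneForm n k) :
    VS (∑ i ∈ s, μ i) = ∑ i ∈ s, VS (μ i) := by
  classical
  induction s using Finset.induction_on with
  | empty => exact OneForm.ext_comp' fun A t => by simp [comp'_VS]
  | insert a s ha ih =>
    rw [sum_insert ha, sum_insert ha, ← ih]
    exact OneForm.ext_comp' fun A t => by simp [comp'_VS]

lemma VS_regard {m : ℕ} (K : ℕ) (μ : OneForm n m) : VS (regard K μ) = regard K (VS μ) := by
  refine OneForm.ext_comp' fun A t => ?_
  rw [comp'_VS, comp'_regard, comp'_regard]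
  by_cases h : m ≤ K
  · rw [compAt_eq _ h, compAt_eq _ h, comp'_VS]
  · rw [compAt_of_lt _ (by omega), compAt_of_lt _ (by omega), smul_zero]

lemma comp'_VS_iterate_of_le {k : ℕ} (μ : OneForm n k) (A : Jet n k) {p t : ℕ}
    (h : k + 1 ≤ p + t) : comp' (VS^[p] μ) A t = 0 := by
  induction p generalizing t with
  | zero => exact comp'_of_le μ A (by omega)
  | succ p ih => rw [Function.iterate_succ_apply', comp'_VS, ih (by omega), smul_zero]

lemma VS_iterate_eq_zero {k : ℕ} (μ : OneForm n k) : VS^[k + 1] μ = 0 :=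
  OneForm.ext_comp' fun A t => by rw [comp'_VS_iterate_of_le μ A (by omega), comp'_zero]

lemma comp'_dT_zero {k : ℕ} (μ : OneForm n k) (A : Jet n (k + 1)) :
    comp' (dT μ) A 0 = DT (fun B => comp' μ B 0) A :=
  (comp'_coe (dT μ) A 0).trans (add_zero _)

lemma comp'_dT_succ {k : ℕ} (μ : OneForm n k) (A : Jet n (k + 1)) (s : ℕ) :
    comp' (dT μ) A (s + 1) =
      DT (fun B => comp' μ B (s + 1)) A + comp' μ (trunc (Nat.le_succ k) A) s := by
  by_cases hs : s + 1 < k + 2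
  · rw [comp'_coe (dT μ) A ⟨s + 1, hs⟩]
    rfl
  · simp_rw [comp'_of_le _ _ (show k + 2 ≤ s + 1 by omega),
      comp'_of_le _ _ (show k + 1 ≤ s + 1 by omega), comp'_of_le _ _ (show k + 1 ≤ s by omega)]
    simp [DT_eq_fderiv]

end Operators

section Smoothness

variable {n : ℕ}

lemma differentiable_comp' {k : ℕ} {μ : OneForm n k} (hμ : Differentiable ℝ μ) (t : ℕ) :
    Differentiable ℝ fun A => comp' μ A t := by
  unfold comp'
  split_ifs with ht
  · exact differentiable_pi.1 hμ ⟨t, ht⟩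
  · exact differentiable_const _

lemma contDiff_comp' {k : ℕ} {μ : OneForm n k} (hμ : ContDiff ℝ ∞ μ) (t : ℕ) :
    ContDiff ℝ ∞ fun A => comp' μ A t := by
  unfold comp'
  split_ifs with ht
  · exact contDiff_pi.1 hμ ⟨t, ht⟩
  · exact contDiff_const

lemma contDiff_of_comp' {k : ℕ} {μ : OneForm n k} (h : ∀ t, ContDiff ℝ ∞ fun A => comp' μ A t) :
    ContDiff ℝ ∞ μ :=
  contDiff_pi.2 fun i => by simpa only [comp'_coe] using h i

lemma contDiff_VS {k : ℕ} {μ : OneForm n k} (hμ : ContDiff ℝ ∞ μ) : ContDiff ℝ ∞ (VS μ) :=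
  contDiff_of_comp' fun t => by
    simp_rw [comp'_VS]
    exact (contDiff_comp' hμ _).const_smul _

lemma contDiff_VS_iterate {k : ℕ} {μ : OneForm n k} (hμ : ContDiff ℝ ∞ μ) (p : ℕ) :
    ContDiff ℝ ∞ (VS^[p] μ) := by
  induction p with
  | zero => exact hμ
  | succ p ih => rw [Function.iterate_succ_apply']; exact contDiff_VS ih

lemma contDiff_dT {k : ℕ} {μ : OneForm n k} (hμ : ContDiff ℝ ∞ μ) : ContDiff ℝ ∞ (dT μ) :=
  contDiff_of_comp' fun t => by
    cases t with
    | zero => simp_rw [comp'_dT_zero]; exact contDiff_DT (contDiff_comp' hμ 0)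
    | succ s =>
      simp_rw [comp'_dT_succ]
      exact (contDiff_DT (contDiff_comp' hμ _)).add
        ((contDiff_comp' hμ s).comp (contDiff_trunc _))

lemma contDiff_dTiter {k : ℕ} {μ : OneForm n k} (hμ : ContDiff ℝ ∞ μ) (p : ℕ) :
    ContDiff ℝ ∞ (dTiter p μ) := by
  induction p with
  | zero => exact hμ
  | succ p ih => exact contDiff_dT ih

lemma contDiff_regard {m : ℕ} (K : ℕ) {μ : OneForm n m} (hμ : ContDiff ℝ ∞ μ) :
    ContDiff ℝ ∞ (regard K μ) := by
  by_cases h : m ≤ K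
  · refine contDiff_of_comp' fun t => ?_
    simp_rw [comp'_regard, compAt_eq μ h]
    exact (contDiff_comp' hμ t).comp (contDiff_trunc h)
  · rw [regard_of_lt μ (by omega)]
    exact contDiff_const

end Smoothness

section TotalDerivativeOfForms

variable {n : ℕ}

lemma dT_add {k : ℕ} {μ ν : OneForm n k} (hμ : Differentiable ℝ μ) (hν : Differentiable ℝ ν) :
    dT (μ + ν) = dT μ + dT ν := by
  refine OneForm.ext_comp' fun A t => ?_
  have hDT : ∀ t, DT (fun B => comp' μ B t + comp' ν B t) A =
      DT (fun B => comp' μ B t) A + DT (fun B => comp' ν B t) A := fun t =>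
    DT_add A ((differentiable_comp' hμ t) _) ((differentiable_comp' hν t) _)
  cases t with
  | zero => simp only [comp'_add, comp'_dT_zero, hDT]
  | succ s => simp only [comp'_add, comp'_dT_succ, hDT]; abel

lemma dT_smul {k : ℕ} (c : ℝ) (μ : OneForm n k) : dT (c • μ) = c • dT μ := by
  refine OneForm.ext_comp' fun A t => ?_
  cases t with
  | zero => simp only [comp'_smul, comp'_dT_zero, DT_const_smul]
  | succ s => simp only [comp'_smul, comp'_dT_succ, DT_const_smul, smul_add]

lemma dT_zero {k : ℕ} : dT (0 : OneForm n k) = 0 := by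
  simpa using dT_smul 0 (0 : OneForm n k)

lemma dT_sum {k : ℕ} {ι : Type*} (s : Finset ι) {μ : ι → OneForm n k}
    (hμ : ∀ i ∈ s, Differentiable ℝ (μ i)) : dT (∑ i ∈ s, μ i) = ∑ i ∈ s, dT (μ i) := by
  classical
  induction s using Finset.induction_on with
  | empty => simp [dT_zero]
  | insert a s ha ih =>
    have hs : ∀ i ∈ s, Differentiable ℝ (μ i) := fun i hi => hμ i (mem_insert_of_mem hi)
    rw [sum_insert ha, sum_insert ha, dT_add (hμ a (mem_insert_self a s)) (Differentiable.sum hs),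
      ih hs]

lemma dTiter_zero {k : ℕ} (p : ℕ) : dTiter p (0 : OneForm n k) = 0 := by
  induction p with
  | zero => rfl
  | succ p ih => exact (congrArg dT ih).trans dT_zero

lemma dT_regard {m : ℕ} (K : ℕ) {ν : OneForm n m} (hν : Differentiable ℝ ν) :
    dT (regard K ν) = regard (K + 1) (dT ν) := by
  by_cases h : m ≤ K
  · refine OneForm.ext_comp' fun A t => ?_
    have hDT : ∀ t, DT (fun B => comp' (regard K ν) B t) A =
        DT (fun B => comp' ν B t) (trunc (Nat.succ_le_succ h) A) := fun t => by
      simp_rw [comp'_regard, compAt_eq ν h]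
      exact DT_comp_trunc h A (differentiable_comp' hν t _)
    rw [comp'_regard, compAt_eq _ (Nat.succ_le_succ h)]
    cases t with
    | zero => rw [comp'_dT_zero, comp'_dT_zero, hDT]
    | succ s => rw [comp'_dT_succ, comp'_dT_succ, hDT, comp'_regard, compAt_eq ν h]; rfl
  · rw [regard_of_lt ν (by omega), regard_of_lt _ (by omega), dT_zero]

end TotalDerivativeOfForms

section Commutation

variable {n : ℕ}

lemma VS_dT {m : ℕ} (ν : OneForm n m) : VS (dT ν) = dT (VS ν) + regard (m + 1) ν := by
  refine OneForm.ext_comp' fun A t => ?_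
  have hVS : ∀ t, (fun B => comp' (VS ν) B t) = fun B => ((t : ℝ) + 1) • comp' ν B (t + 1) :=
    fun t => funext fun B => comp'_VS ν B t
  rw [comp'_add, comp'_regard, compAt_eq ν (Nat.le_succ m), comp'_VS, comp'_dT_succ]
  cases t with
  | zero => rw [comp'_dT_zero, hVS, DT_const_smul]; simp
  | succ s =>
    rw [comp'_dT_succ, hVS, DT_const_smul, comp'_VS]
    push_cast
    module

/-- For `p = 0` the truncated `p - 1` is harmless: its coefficient is `0`. -/
lemma VS_dTiter {m : ℕ} {ν : OneForm n m} (hν : ContDiff ℝ ∞ ν) (p : ℕ) :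
    VS (dTiter p ν) = dTiter p (VS ν) + (p : ℝ) • regard (m + p) (dTiter (p - 1) ν) := by
  induction p with
  | zero => simp [dTiter]
  | succ p ih =>
    have hlower : (p : ℝ) • regard (m + p + 1) (dT (dTiter (p - 1) ν)) =
        (p : ℝ) • regard (m + p + 1) (dTiter p ν) := by
      cases p with
      | zero => simp
      | succ q => rfl
    change VS (dT (dTiter p ν)) = _
    rw [VS_dT, ih, dT_add ((contDiff_dTiter (contDiff_VS hν) p).differentiable (by simp))
      (((contDiff_regard _ (contDiff_dTiter hν _)).differentiable (by simp)).const_smul _),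
      dT_smul, dT_regard _ ((contDiff_dTiter hν _).differentiable (by simp)), hlower,
      Nat.add_sub_cancel]
    push_cast
    rw [add_smul, one_smul]
    exact add_assoc _ _ _

end Commutation

section Dop

variable {n k : ℕ}

lemma Dop_eq_sum (r : ℕ) (lam : OneForm n k) :
    Dop r lam = ∑ i ∈ range (k + 1 - r),
      ((-1 : ℝ) ^ i / (r + i).factorial) • regard (2 * k - r) (dTiter i (VS^[r + i] lam)) := by
  ext A t : 2
  simp only [Dop, Finset.sum_apply, Pi.smul_apply, ← Ico_add_one_right_eq_Icc,
    sum_Ico_eq_sum_range]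
  refine sum_congr rfl fun i _ => ?_
  rw [show r + i + r = i + 2 * r by ring, pow_add, pow_mul, neg_one_sq, one_pow, mul_one,
    Nat.add_sub_cancel_left]
  rfl

lemma Dop_of_lt (lam : OneForm n k) {r : ℕ} (h : k < r) : Dop r lam = 0 := by
  rw [Dop_eq_sum, Nat.sub_eq_zero_of_le (show k + 1 ≤ r by omega), sum_range_zero]

lemma VS_Dop {lam : OneForm n k} (hlam : ContDiff ℝ ∞ lam) {r : ℕ} (hr : r ≤ k) :
    VS (Dop r lam) = (r : ℝ) • regard (2 * k - r) (Dop (r + 1) lam) := by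
  have hcoeff : ∀ i : ℕ, (-1 : ℝ) ^ i / (r + i).factorial +
      (-1) ^ (i + 1) / (r + i + 1).factorial * ((i + 1 : ℕ) : ℝ) =
        r * ((-1) ^ i / (r + i + 1).factorial) := fun i => by
    have : ((r + i).factorial : ℝ) ≠ 0 := by positivity
    rw [Nat.factorial_succ (r + i)]
    push_cast
    field_simp
    ring
  have hterm : ∀ i ∈ range (k + 1 - r),
      VS (((-1 : ℝ) ^ i / (r + i).factorial) • regard (2 * k - r) (dTiter i (VS^[r + i] lam))) =
        ((-1 : ℝ) ^ i / (r + i).factorial) • regard (2 * k - r) (dTiter i (VS^[r + i + 1] lam)) +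
        ((-1 : ℝ) ^ i / (r + i).factorial * i) •
          regard (2 * k - r) (dTiter (i - 1) (VS^[r + i] lam)) := by
    intro i hi
    rw [mem_range] at hi
    rw [VS_smul, VS_regard, VS_dTiter (contDiff_VS_iterate hlam _), map_add, map_smul,
      regard_regard _ (by omega) (by omega), ← Function.iterate_succ_apply' VS, smul_add, smul_smul]
  rw [Dop_eq_sum, Dop_eq_sum, VS_sum, sum_congr rfl hterm, sum_add_distrib,
    show k + 1 - r = k - r + 1 by omega, sum_range_succ, sum_range_succ']
  -- The top term of the first sum contains `S^{k+1} λ = 0`; the bottom one of the second has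
  -- coefficient `0`.
  rw [show r + (k - r) + 1 = k + 1 by omega, VS_iterate_eq_zero, dTiter_zero, map_zero, smul_zero,
    add_zero, Nat.cast_zero, mul_zero, zero_smul, add_zero, ← sum_add_distrib,
    show k + 1 - (r + 1) = k - r by omega, map_sum, smul_sum]
  refine sum_congr rfl fun i hi => ?_
  rw [mem_range] at hi
  rw [map_smul, regard_regard _ (by omega) (by omega), smul_smul, Nat.add_sub_cancel,
    ← add_assoc, add_right_comm r 1 i, ← add_smul, hcoeff]

lemma regard_Dop_eq_sub {lam : OneForm n k} (hlam : ContDiff ℝ ∞ lam) {s : ℕ} (hs : s + 1 ≤ k) :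
    regard (2 * k - (s + 1) + 1) (Dop s lam) =
      (1 / (s.factorial : ℝ)) • regard (2 * k - (s + 1) + 1) (VS^[s] lam) -
        dT (Dop (s + 1) lam) := by
  have hdiff : ∀ p q, Differentiable ℝ (dTiter q (VS^[p] lam)) := fun p q =>
    (contDiff_dTiter (contDiff_VS_iterate hlam p) q).differentiable (by simp)
  have hdiff_regard : ∀ K p q, Differentiable ℝ (regard K (dTiter q (VS^[p] lam))) :=
    fun K p q =>
      (contDiff_regard K (contDiff_dTiter (contDiff_VS_iterate hlam p) q)).differentiable (by simp)
  rw [Dop_eq_sum, Dop_eq_sum, map_sum, dT_sum _ fun i _ => (hdiff_regard _ _ i).const_smul _,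
    show k + 1 - s = k - s + 1 by omega, sum_range_succ', show k + 1 - (s + 1) = k - s by omega,
    sub_eq_neg_add, ← sum_neg_distrib]
  congr 1
  · refine sum_congr rfl fun i hi => ?_
    rw [mem_range] at hi
    rw [map_smul, regard_regard _ (by omega) (by omega), dT_smul, dT_regard _ (hdiff _ _),
      ← add_assoc, add_right_comm s i 1, pow_succ, mul_neg_one, neg_div]
    exact neg_smul (M := OneForm n (2 * k - (s + 1) + 1)) _ _
  · rw [map_smul, regard_regard _ (by omega) (by omega), pow_zero, add_zero]
    rfl

lemma VS_iterate_Dop_one {lam : OneForm n k} (hlam : ContDiff ℝ ∞ lam) {q : ℕ} (hq : q ≤ k) :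
    VS^[q] (Dop 1 lam) = (q.factorial : ℝ) • regard (2 * k - 1) (Dop (q + 1) lam) := by
  induction q with
  | zero =>
    rw [Function.iterate_zero_apply, regard_self, Nat.factorial_zero, Nat.cast_one, one_smul]
  | succ q ih =>
    rw [Function.iterate_succ_apply', ih (by omega), VS_smul, VS_regard, VS_Dop hlam hq, map_smul,
      regard_regard _ (by omega) (by omega), smul_smul, Nat.factorial_succ, Nat.cast_mul,
      mul_comm ((q + 1 : ℕ) : ℝ)]

end Dop

theorem Dop_relations (n k : ℕ)
    (lam : OneForm n k) (hlam : ContDiff ℝ (⊤ : ℕ∞) lam) :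
    (∀ r : ℕ, 1 ≤ r → r ≤ k → ∀ (A : Jet n (2 * k - r + 1)) (i : ℕ),
        compAt (Dop (r - 1) lam) A i =
          (1 / ((r - 1).factorial : ℝ)) • compAt (VS^[r - 1] lam) A i -
            compAt (dT (Dop r lam)) A i) ∧
    (∀ r : ℕ, r ≤ k → ∀ (A : Jet n (2 * k - r)) (i : ℕ),
        comp' (VS (Dop r lam)) A i = (r : ℝ) • compAt (Dop (r + 1) lam) A i) ∧
    (∀ (A : Jet n (2 * k)) (i : ℕ), comp' (VS (Dop 0 lam)) A i = 0) ∧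
    (∀ (A : Jet n (2 * k - 1)) (i : ℕ), comp' (VS^[k] (Dop 1 lam)) A i = 0) := by
  refine ⟨fun r h1 h2 A i => ?_, fun r hr A i => ?_, fun A i => ?_, fun A i => ?_⟩
  · obtain ⟨s, rfl⟩ := Nat.exists_eq_add_of_le' h1
    rw [Nat.add_sub_cancel, ← comp'_regard, regard_Dop_eq_sub hlam h2, comp'_sub, comp'_smul,
      comp'_regard, compAt_self]
  · rw [VS_Dop hlam hr, comp'_smul, comp'_regard]
  · rw [VS_Dop hlam (Nat.zero_le k), Nat.cast_zero, zero_smul, comp'_zero]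
  · rw [VS_iterate_Dop_one hlam le_rfl, Dop_of_lt lam (Nat.lt_succ_self k), map_zero, smul_zero,
      comp'_zero]

end
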